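/- Let q, β, γ, t be complex numbers with |q| < 1, 0 < |β| < 1, |γ| < 1, |βt²| < 1, |γt²| < 1, and β q^k ≠ 1 for all k ≥ 1 (so all denominators below are nonzero), and let m be a nonnegative integer. Then Σ_{n=0}^{∞} [(qβ/γ;q)_n (γ t² q^n;q)_∞ / ((q;q)_n (β t² q^n;q)_∞)] (γ q^m)^n = [(β;q)_∞ / (γ;q)_∞] · Σ_{j=0}^{∞} [(γ/β;q)_j (γ;q)_{m+j} / ((q;q)_j (β;q)_{m+j+1})] β^j t^{2j}, both series converging absolutely (here γ ≠ 0 is required for (qβ/γ;q)_n and the left-hand series to make sense; when |γ q^m| < 1 both sides converge). -/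

import Mathlib

/-- Finite q-Pochhammer symbol `(a;q)_n`. -/
noncomputable def qp (q a : ℂ) (n : ℕ) : ℂ := ∏ k ∈ Finset.range n, (1 - a * q ^ k)

/-- Infinite q-Pochhammer symbol `(a;q)_∞`. -/
noncomputable def qpi (q a : ℂ) : ℂ := ∏' k : ℕ, (1 - a * q ^ k)

/-- Real finite q-Pochhammer symbol. -/
noncomputable def qpR (q a : ℝ) (n : ℕ) : ℝ := ∏ k ∈ Finset.range n, (1 - a * q ^ k)

/-- The q-functions `C_n^{(α,β)}(e^{iθ};q)`; for `α = β` these are the continuous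
q-ultraspherical polynomials `C_n(cos θ; β | q)`. -/
noncomputable def Cab (q α β : ℂ) (n : ℕ) (θ : ℝ) : ℂ :=
  ∑ k ∈ Finset.range (n + 1),
    qp q α k * qp q β (n - k) / (qp q q k * qp q q (n - k)) *
      Complex.exp (Complex.I * ((n : ℂ) - 2 * (k : ℂ)) * (θ : ℂ))

/-- The weight function `ω^{(α,β)}(cos θ | q)`; for `α = β` this is `ω_β(cos θ | q)`. -/
noncomputable def wab (q α β : ℂ) (θ : ℝ) : ℂ :=
  qpi q (Complex.exp (2 * Complex.I * (θ : ℂ))) *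
      qpi q (Complex.exp (-(2 * Complex.I * (θ : ℂ)))) /
    (qpi q (α * Complex.exp (2 * Complex.I * (θ : ℂ))) *
      qpi q (β * Complex.exp (-(2 * Complex.I * (θ : ℂ)))))

/-- The normalization constant `h_n(β|q)`. -/
noncomputable def hcst (q β : ℂ) (n : ℕ) : ℂ :=
  qpi q q * qpi q (β ^ 2) * qp q q n * (1 - β * q ^ n) /
    (2 * (Real.pi : ℂ) * (qpi q β * qpi q (β * q) * qp q (β ^ 2) n * (1 - β)))

/-- The homogeneous polynomials `Φ_n^{(a,b)}(x, y | q)`. -/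
noncomputable def Phi (q a b : ℂ) (n : ℕ) (x y : ℂ) : ℂ :=
  ∑ k ∈ Finset.range (n + 1),
    qp q q n / (qp q q k * qp q q (n - k)) * qp q a k * qp q b (n - k) * x ^ k * y ^ (n - k)

/-- The Jackson q-integral `∫_a^b f(z) d_q z`. -/
noncomputable def jackson (q a b : ℂ) (f : ℂ → ℂ) : ℂ :=
  (1 - q) * b * ∑' n : ℕ, q ^ n * f (b * q ^ n) -
    (1 - q) * a * ∑' n : ℕ, q ^ n * f (a * q ^ n)

/-!
The proof rests on the q-binomial theorem `∑ (a;q)ₙ/(q;q)ₙ zⁿ = (az;q)_∞/(z;q)_∞` for `|z| < 1`,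
which follows from the functional equation `(1 - z) S(z) = (1 - az) S(qz)` of the left-hand side
`S`, iterated `N` times with `N → ∞`.

By it, `(γt²qⁿ;q)_∞/(βt²qⁿ;q)_∞ = ∑ⱼ (γ/β;q)ⱼ/(q;q)ⱼ (βt²qⁿ)ʲ`, which turns the left-hand series
into a double series dominated by `C |γ|ⁿ |βt²|ʲ`. Summing it over `n` first is again a q-binomial
series, with `a = qβ/γ` and `z = γq^{m+j}`, of value
`(βq^{m+j+1};q)_∞/(γq^{m+j};q)_∞ = (β;q)_∞/(γ;q)_∞ · (γ;q)_{m+j}/(β;q)_{m+j+1}`.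
-/

open Filter Topology

section QPochhammer

variable {q : ℂ}

lemma qp_succ (a : ℂ) (n : ℕ) : qp q a (n + 1) = qp q a n * (1 - a * q ^ n) :=
  Finset.prod_range_succ _ _

lemma qp_ne_zero {a : ℂ} (ha : ∀ k, 1 - a * q ^ k ≠ 0) (n : ℕ) : qp q a n ≠ 0 :=
  Finset.prod_ne_zero_iff.mpr fun k _ => ha k

lemma norm_mul_pow_le (hq : ‖q‖ ≤ 1) (w : ℂ) (k : ℕ) : ‖w * q ^ k‖ ≤ ‖w‖ := by
  rw [norm_mul, norm_pow]
  exact mul_le_of_le_one_right (norm_nonneg w) (pow_le_one₀ (norm_nonneg q) hq)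

lemma norm_mul_pow_lt_one (hq : ‖q‖ ≤ 1) {w : ℂ} (hw : ‖w‖ < 1) (k : ℕ) : ‖w * q ^ k‖ < 1 :=
  (norm_mul_pow_le hq w k).trans_lt hw

lemma one_sub_mul_pow_ne_zero (hq : ‖q‖ ≤ 1) {w : ℂ} (hw : ‖w‖ < 1) (k : ℕ) :
    1 - w * q ^ k ≠ 0 := by
  intro h
  have := norm_mul_pow_lt_one hq hw k
  rw [← sub_eq_zero.mp h, norm_one] at this
  exact this.false

variable (hq : ‖q‖ < 1)
include hq

lemma summable_norm_mul_pow (a : ℂ) : Summable fun k : ℕ => ‖a * q ^ k‖ := by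
  simpa [norm_mul, norm_pow] using
    (summable_geometric_of_lt_one (norm_nonneg q) hq).mul_left ‖a‖

lemma multipliable_qpi (a : ℂ) : Multipliable fun k : ℕ => 1 - a * q ^ k := by
  simpa [sub_eq_add_neg] using
    multipliable_one_add_of_summable (f := fun k => -(a * q ^ k))
      (by simpa using summable_norm_mul_pow hq a)

lemma tendsto_qp_qpi (a : ℂ) : Tendsto (qp q a) atTop (𝓝 (qpi q a)) :=
  (multipliable_qpi hq a).hasProd.tendsto_prod_nat

lemma qp_mul_qpi (a : ℂ) (n : ℕ) : qp q a n * qpi q (a * q ^ n) = qpi q a := by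
  have hshift : (fun k => 1 - a * q ^ n * q ^ k) = fun k => 1 - a * q ^ (k + n) := by
    ext k; ring
  have hmul := multipliable_qpi hq (a * q ^ n)
  rw [hshift] at hmul
  rw [qp, qpi, qpi, hshift]
  exact Multipliable.prod_mul_tprod_nat_mul' (f := fun k => 1 - a * q ^ k) (k := n) hmul

lemma qpi_ne_zero {a : ℂ} (ha : ∀ k, 1 - a * q ^ k ≠ 0) : qpi q a ≠ 0 := by
  simpa [qpi, sub_eq_add_neg] using
    tprod_one_add_ne_zero_of_summable (f := fun k => -(a * q ^ k))
      (by simpa [sub_eq_add_neg] using ha) (by simpa using summable_norm_mul_pow hq a)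

lemma exists_norm_qp_div_qp_le (a : ℂ) : ∃ C, 0 ≤ C ∧ ∀ n, ‖qp q a n / qp q q n‖ ≤ C := by
  have hlim := (tendsto_qp_qpi hq a).div (tendsto_qp_qpi hq q)
    (qpi_ne_zero hq (one_sub_mul_pow_ne_zero hq.le hq))
  obtain ⟨C, hC⟩ := isBounded_iff_forall_norm_le.mp (Metric.isBounded_range_of_tendsto _ hlim)
  exact ⟨C, (norm_nonneg _).trans (hC _ ⟨0, rfl⟩), fun n => hC _ ⟨n, rfl⟩⟩

end QPochhammer

noncomputable def qBinomialSeries (q a z : ℂ) : ℂ := ∑' n : ℕ, qp q a n / qp q q n * z ^ n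

section QBinomial

variable {q : ℂ} (hq : ‖q‖ < 1) (a : ℂ)
include hq

lemma summable_norm_qBinomial {z : ℂ} (hz : ‖z‖ < 1) :
    Summable fun n : ℕ => ‖qp q a n / qp q q n * z ^ n‖ := by
  obtain ⟨C, -, hC⟩ := exists_norm_qp_div_qp_le hq a
  refine .of_nonneg_of_le (fun n => norm_nonneg _) (fun n => ?_)
    ((summable_geometric_of_lt_one (norm_nonneg z) hz).mul_left C)
  rw [norm_mul, norm_pow]
  exact mul_le_mul_of_nonneg_right (hC n) (by positivity)

lemma qp_div_qp_succ_mul (n : ℕ) :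
    qp q a (n + 1) / qp q q (n + 1) * (1 - q ^ (n + 1)) =
      qp q a n / qp q q n * (1 - a * q ^ n) := by
  have hqq := one_sub_mul_pow_ne_zero hq.le hq
  rw [qp_succ, qp_succ, pow_succ', div_mul_eq_mul_div, div_mul_eq_mul_div,
    div_eq_div_iff (mul_ne_zero (qp_ne_zero hqq n) (hqq n)) (qp_ne_zero hqq n)]
  ring

lemma qBinomialSeries_functional_eq {w : ℂ} (hw : ‖w‖ < 1) :
    (1 - w) * qBinomialSeries q a w = (1 - a * w) * qBinomialSeries q a (q * w) := by
  set c : ℕ → ℂ := fun n => qp q a n / qp q q n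
  have s₁ : Summable fun n => c n * w ^ n := (summable_norm_qBinomial hq a hw).of_norm
  have hqw : ‖q * w‖ < 1 := by simpa [mul_comm] using norm_mul_pow_lt_one hq.le hw 1
  have s₂ : Summable fun n => c n * (q * w) ^ n := (summable_norm_qBinomial hq a hqw).of_norm
  have hdiff : qBinomialSeries q a w - qBinomialSeries q a (q * w) =
      ∑' n, c n * (1 - q ^ n) * w ^ n := by
    rw [qBinomialSeries, qBinomialSeries, ← s₁.tsum_sub s₂]
    exact tsum_congr fun n => by simp only [c, mul_pow]; ring
  -- the `n = 0` term vanishes; after shifting, the coefficient recurrence applies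
  have hshift : ∑' n, c n * (1 - q ^ n) * w ^ n =
      w * qBinomialSeries q a w - a * w * qBinomialSeries q a (q * w) := by
    have s : Summable fun n => c n * (1 - q ^ n) * w ^ n :=
      (s₁.sub s₂).congr fun n => by simp only [mul_pow]; ring
    rw [s.tsum_eq_zero_add, qBinomialSeries, qBinomialSeries, ← s₁.tsum_mul_left,
      ← s₂.tsum_mul_left, ← (s₁.mul_left w).tsum_sub (s₂.mul_left (a * w))]
    simp only [pow_zero, sub_self, mul_zero, zero_mul, zero_add]
    refine tsum_congr fun n => ?_
    have hrec : c (n + 1) * (1 - q ^ (n + 1)) = c n * (1 - a * q ^ n) :=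
      qp_div_qp_succ_mul hq a n
    rw [hrec, mul_pow, pow_succ]
    ring
  linear_combination hdiff + hshift

lemma qp_mul_qBinomialSeries {z : ℂ} (hz : ‖z‖ < 1) (N : ℕ) :
    qp q z N * qBinomialSeries q a z = qp q (a * z) N * qBinomialSeries q a (q ^ N * z) := by
  induction N with
  | zero => simp [qp]
  | succ N ih =>
    have hFE := qBinomialSeries_functional_eq hq a (w := q ^ N * z)
      (by simpa [mul_comm] using norm_mul_pow_lt_one hq.le hz N)
    rw [qp_succ, qp_succ, show q ^ (N + 1) * z = q * (q ^ N * z) by ring]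
    linear_combination (1 - z * q ^ N) * ih + qp q (a * z) N * hFE

lemma tendsto_qBinomialSeries_pow_mul {z : ℂ} (hz : ‖z‖ < 1) :
    Tendsto (fun N : ℕ => qBinomialSeries q a (q ^ N * z)) atTop (𝓝 1) := by
  obtain ⟨C, hC₀, hC⟩ := exists_norm_qp_div_qp_le hq a
  have hpow : Tendsto (fun N : ℕ => q ^ N * z) atTop (𝓝 0) := by
    simpa using (tendsto_pow_atTop_nhds_zero_of_norm_lt_one hq).mul_const z
  have hlim := tendsto_tsum_of_dominated_convergence
    (f := fun N n => qp q a n / qp q q n * (q ^ N * z) ^ n)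
    (g := fun n => qp q a n / qp q q n * 0 ^ n)
    ((summable_geometric_of_lt_one (norm_nonneg z) hz).mul_left C)
    (fun n => (hpow.pow n).const_mul _)
    (.of_forall fun N n => by
      rw [norm_mul, norm_pow]
      exact mul_le_mul (hC n) (pow_le_pow_left₀ (norm_nonneg _)
        (by simpa [mul_comm] using norm_mul_pow_le hq.le z N) n) (by positivity) hC₀)
  rw [tsum_eq_single 0 fun n hn => by simp [hn]] at hlim
  simpa [qp, qBinomialSeries] using hlim

theorem qBinomialSeries_eq {z : ℂ} (hz : ‖z‖ < 1) :
    qBinomialSeries q a z = qpi q (a * z) / qpi q z := by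
  have h₁ : Tendsto (fun N => qp q z N * qBinomialSeries q a z) atTop
      (𝓝 (qpi q z * qBinomialSeries q a z)) :=
    (tendsto_qp_qpi hq z).mul_const _
  have h₂ : Tendsto (fun N => qp q z N * qBinomialSeries q a z) atTop (𝓝 (qpi q (a * z) * 1)) :=
    ((tendsto_qp_qpi hq (a * z)).mul (tendsto_qBinomialSeries_pow_mul hq a hz)).congr
      fun N => (qp_mul_qBinomialSeries hq a hz N).symm
  rw [eq_div_iff (qpi_ne_zero hq (one_sub_mul_pow_ne_zero hq.le hz)), mul_comm]
  simpa using tendsto_nhds_unique h₁ h₂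

theorem hasSum_qBinomial {z : ℂ} (hz : ‖z‖ < 1) :
    HasSum (fun n : ℕ => qp q a n / qp q q n * z ^ n) (qpi q (a * z) / qpi q z) :=
  qBinomialSeries_eq hq a hz ▸ (summable_norm_qBinomial hq a hz).of_norm.hasSum

end QBinomial

lemma summable_norm_tsum_of_summable_norm {α β E : Type*} [NormedAddCommGroup E]
    [CompleteSpace E] {f : α × β → E} (hf : Summable fun p => ‖f p‖) :
    Summable fun a => ‖∑' b, f (a, b)‖ :=
  hf.prod.of_nonneg_of_le (fun _ => norm_nonneg _) fun a =>
    norm_tsum_le_tsum_norm (hf.prod_factor a)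

lemma qpi_mul_pow_div_qpi_mul_pow {q : ℂ} (hq : ‖q‖ < 1) {a b : ℂ} {n k : ℕ}
    (ha : qpi q a ≠ 0) (hb : qp q b k ≠ 0) :
    qpi q (b * q ^ k) / qpi q (a * q ^ n) = qpi q b / qpi q a * (qp q a n / qp q b k) := by
  rw [← qp_mul_qpi hq a n] at ha ⊢
  rw [← qp_mul_qpi hq b k]
  have := mul_ne_zero_iff.mp ha
  field_simp [this.1, this.2]

noncomputable def doubleTerm (q β γ t : ℂ) (m n j : ℕ) : ℂ :=
  qp q (q * β / γ) n / qp q q n * (γ * q ^ m) ^ n *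
    (qp q (γ / β) j / qp q q j * (β * t ^ 2 * q ^ n) ^ j)

section DoubleSeries

variable {q β γ t : ℂ} (hq : ‖q‖ < 1) (m : ℕ)
include hq

lemma summable_norm_doubleTerm (hγ : ‖γ‖ < 1) (hβt : ‖β * t ^ 2‖ < 1) :
    Summable fun p : ℕ × ℕ => ‖doubleTerm q β γ t m p.1 p.2‖ := by
  obtain ⟨C₁, hC₁₀, hC₁⟩ := exists_norm_qp_div_qp_le hq (q * β / γ)
  obtain ⟨C₂, hC₂₀, hC₂⟩ := exists_norm_qp_div_qp_le hq (γ / β)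
  have hgeom := (summable_geometric_of_lt_one (norm_nonneg γ) hγ).mul_of_nonneg
    (summable_geometric_of_lt_one (norm_nonneg _) hβt) (fun _ => by positivity)
    (fun _ => by positivity)
  refine .of_nonneg_of_le (fun _ => norm_nonneg _) (fun ⟨n, j⟩ => ?_) (hgeom.mul_left (C₁ * C₂))
  have hγm := norm_mul_pow_le hq.le γ m
  have hβtn := norm_mul_pow_le hq.le (β * t ^ 2) n
  calc ‖doubleTerm q β γ t m n j‖
      = ‖qp q (q * β / γ) n / qp q q n‖ * ‖γ * q ^ m‖ ^ n *
          (‖qp q (γ / β) j / qp q q j‖ * ‖β * t ^ 2 * q ^ n‖ ^ j) := by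
        simp only [doubleTerm, norm_mul, norm_pow]
    _ ≤ C₁ * ‖γ‖ ^ n * (C₂ * ‖β * t ^ 2‖ ^ j) := by gcongr; exacts [hC₁ n, hC₂ j]
    _ = C₁ * C₂ * (‖γ‖ ^ (n, j).1 * ‖β * t ^ 2‖ ^ (n, j).2) := by ring

lemma hasSum_doubleTerm_row (hβ : β ≠ 0) (hβt : ‖β * t ^ 2‖ < 1) (n : ℕ) :
    HasSum (fun j => doubleTerm q β γ t m n j)
      (qp q (q * β / γ) n * qpi q (γ * t ^ 2 * q ^ n) /
        (qp q q n * qpi q (β * t ^ 2 * q ^ n)) * (γ * q ^ m) ^ n) := by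
  have h := (hasSum_qBinomial hq (γ / β) (norm_mul_pow_lt_one hq.le hβt n)).mul_left
    (qp q (q * β / γ) n / qp q q n * (γ * q ^ m) ^ n)
  rw [show γ / β * (β * t ^ 2 * q ^ n) = γ * t ^ 2 * q ^ n by field_simp] at h
  have hval : qp q (q * β / γ) n / qp q q n * (γ * q ^ m) ^ n *
      (qpi q (γ * t ^ 2 * q ^ n) / qpi q (β * t ^ 2 * q ^ n)) =
      qp q (q * β / γ) n * qpi q (γ * t ^ 2 * q ^ n) /
        (qp q q n * qpi q (β * t ^ 2 * q ^ n)) * (γ * q ^ m) ^ n := by ring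
  rwa [hval] at h

lemma hasSum_doubleTerm_col (hγ₀ : γ ≠ 0) (hγ : ‖γ‖ < 1) (hβ : ∀ k, 1 - β * q ^ k ≠ 0)
    (j : ℕ) :
    HasSum (fun n => doubleTerm q β γ t m n j)
      (qpi q β / qpi q γ *
        (qp q (γ / β) j * qp q γ (m + j) / (qp q q j * qp q β (m + j + 1)) * β ^ j *
          t ^ (2 * j))) := by
  have h := (hasSum_qBinomial hq (q * β / γ) (norm_mul_pow_lt_one hq.le hγ (m + j))).mul_left
    (qp q (γ / β) j / qp q q j * (β * t ^ 2) ^ j)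
  rw [show q * β / γ * (γ * q ^ (m + j)) = β * q ^ (m + j + 1) by field_simp; ring,
    qpi_mul_pow_div_qpi_mul_pow hq (qpi_ne_zero hq (one_sub_mul_pow_ne_zero hq.le hγ))
      (qp_ne_zero hβ _)] at h
  have hval : qp q (γ / β) j / qp q q j * (β * t ^ 2) ^ j *
      (qpi q β / qpi q γ * (qp q γ (m + j) / qp q β (m + j + 1))) =
      qpi q β / qpi q γ *
        (qp q (γ / β) j * qp q γ (m + j) / (qp q q j * qp q β (m + j + 1)) * β ^ j *
          t ^ (2 * j)) := by ring
  rw [hval] at h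
  exact h.congr_fun fun n => by simp only [doubleTerm]; ring

end DoubleSeries

theorem stmt13_general (q β γ t : ℂ) (hq : ‖q‖ < 1) (hβ0 : 0 < ‖β‖)
    (hβ1 : ‖β‖ < 1) (hγ0 : γ ≠ 0) (hγ : ‖γ‖ < 1)
    (hβt : ‖β * t ^ 2‖ < 1)
    (hβq : ∀ k : ℕ, 1 ≤ k → β * q ^ k ≠ 1) (m : ℕ) :
    Summable (fun n : ℕ =>
        ‖qp q (q * β / γ) n * qpi q (γ * t ^ 2 * q ^ n) /
            (qp q q n * qpi q (β * t ^ 2 * q ^ n)) * (γ * q ^ m) ^ n‖) ∧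
    Summable (fun j : ℕ =>
        ‖qp q (γ / β) j * qp q γ (m + j) / (qp q q j * qp q β (m + j + 1)) * β ^ j *
          t ^ (2 * j)‖) ∧
    ∑' n : ℕ,
        qp q (q * β / γ) n * qpi q (γ * t ^ 2 * q ^ n) /
          (qp q q n * qpi q (β * t ^ 2 * q ^ n)) * (γ * q ^ m) ^ n =
      qpi q β / qpi q γ *
        ∑' j : ℕ,
          qp q (γ / β) j * qp q γ (m + j) / (qp q q j * qp q β (m + j + 1)) * β ^ j *
            t ^ (2 * j) := by
  have hβ : ∀ k, 1 - β * q ^ k ≠ 0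
    | 0 => by simpa using one_sub_mul_pow_ne_zero hq.le hβ1 0
    | k + 1 => sub_ne_zero.mpr (hβq (k + 1) k.succ_pos).symm
  have hF := summable_norm_doubleTerm hq m hγ hβt
  have hrow := hasSum_doubleTerm_row hq m (γ := γ) (norm_pos_iff.mp hβ0) hβt
  have hcol := hasSum_doubleTerm_col hq m (t := t) hγ0 hγ hβ
  have hK : qpi q β / qpi q γ ≠ 0 :=
    div_ne_zero (qpi_ne_zero hq hβ) (qpi_ne_zero hq (one_sub_mul_pow_ne_zero hq.le hγ))
  refine ⟨?_, ?_, ?_⟩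
  · simpa only [fun n => (hrow n).tsum_eq] using summable_norm_tsum_of_summable_norm hF
  · refine ((summable_norm_tsum_of_summable_norm hF.prod_symm).mul_left
      ‖(qpi q β / qpi q γ)⁻¹‖).congr fun j => ?_
    simp only [← norm_mul, Prod.swap_prod_mk, (hcol j).tsum_eq, inv_mul_cancel_left₀ hK]
  · calc _ = ∑' n, ∑' j, doubleTerm q β γ t m n j := tsum_congr fun n => (hrow n).tsum_eq.symm
      _ = ∑' j, ∑' n, doubleTerm q β γ t m n j := (hF.of_norm.tsum_comm).symm
      _ = _ := by rw [tsum_congr fun j => (hcol j).tsum_eq, tsum_mul_left]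

/-- The series transformation used in the proof of Theorem 1.2. -/
theorem stmt13 (q β γ t : ℂ) (hq : ‖q‖ < 1) (hβ0 : 0 < ‖β‖)
    (hβ1 : ‖β‖ < 1) (hγ0 : γ ≠ 0) (hγ : ‖γ‖ < 1)
    (hβt : ‖β * t ^ 2‖ < 1) (hγt : ‖γ * t ^ 2‖ < 1)
    (hβq : ∀ k : ℕ, 1 ≤ k → β * q ^ k ≠ 1) (m : ℕ) :
    Summable (fun n : ℕ =>
        ‖qp q (q * β / γ) n * qpi q (γ * t ^ 2 * q ^ n) /
            (qp q q n * qpi q (β * t ^ 2 * q ^ n)) * (γ * q ^ m) ^ n‖) ∧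
    Summable (fun j : ℕ =>
        ‖qp q (γ / β) j * qp q γ (m + j) / (qp q q j * qp q β (m + j + 1)) * β ^ j *
          t ^ (2 * j)‖) ∧
    ∑' n : ℕ,
        qp q (q * β / γ) n * qpi q (γ * t ^ 2 * q ^ n) /
          (qp q q n * qpi q (β * t ^ 2 * q ^ n)) * (γ * q ^ m) ^ n =
      qpi q β / qpi q γ *
        ∑' j : ℕ,
          qp q (γ / β) j * qp q γ (m + j) / (qp q q j * qp q β (m + j + 1)) * β ^ j *
            t ^ (2 * j) :=
  stmt13_general q β γ t hq hβ0 hβ1 hγ0 hγ hβt hβq m
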